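/- Let Γ(x₀, λ) = ∫_{ℝⁿ₊} Λⁿ/² K̃(λȳ + x₀, λyₙ) / (|ȳ|² + (yₙ + D)² - 1)ⁿ dȳ dyₙ - ∫_{ℝⁿ⁻¹} Λ^{(n-1)/2} βₙ D H̃(λȳ + x₀) / (|ȳ|² + D² - 1)^{n-1} dȳ, where K̃ = K ∘ I, H̃ = H ∘ I for bounded continuous K on B̄ⁿ and H on Sⁿ⁻¹. Then as λ + |x₀| → +∞, Γ(x₀, λ) converges to a(D) K(0,…,0,-1) - b(D) H(0,…,0,-1), where a(D) = Λⁿ/² ∫_{ℝⁿ₊} dy/(|ȳ|²+(yₙ+D)²-1)ⁿ and b(D) = Λ^{(n-1)/2} βₙ D ∫_{ℝⁿ⁻¹} dȳ/(|ȳ|²+D²-1)^{n-1}. -/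

import Mathlib

/-!
Both integrals are averages of a bounded function against a fixed integrable weight `w`, evaluated
along the affine maps `y ↦ λ y + x₀`. Since `I(z) → (0, …, 0, -1)` as `|z| → ∞` in the closed upper
half-space, the integrands converge to the value at the south pole except on the set where
`|λ y + x₀| < R`. That set is a ball of radius `R / λ` centred at `-x₀ / λ`: when `λ` is large it
has small Lebesgue measure, and otherwise `|x₀|` is large and the ball lies far out. In both cases
its `w`-mass tends to zero, by absolute continuity of the integral and by integrability of `w`.
-/

open MeasureTheory Real Filter

/-- The inversion map from the half-space to the ball, in coordinates
`(x̄, xₙ) ∈ ℝⁿ⁻¹ × ℝ`. -/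
noncomputable def invP {m : ℕ} (q : EuclideanSpace ℝ (Fin m) × ℝ) :
    EuclideanSpace ℝ (Fin m) × ℝ :=
  ((2 / (‖q.1‖ ^ 2 + (q.2 + 1) ^ 2)) • q.1,
    (1 - ‖q.1‖ ^ 2 - q.2 ^ 2) / (‖q.1‖ ^ 2 + (q.2 + 1) ^ 2))

open Metric Topology Bornology

lemma dist_invP_le {m : ℕ} {x : EuclideanSpace ℝ (Fin m) × ℝ} (hx₂ : 0 ≤ x.2) (hx : x ≠ 0) :
    dist (invP x) (0, -1) ≤ 2 / ‖x‖ := by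
  set a := ‖x.1‖
  set t := x.2
  have hnorm : ‖x‖ = max a t := by rw [Prod.norm_def, Real.norm_eq_abs, abs_of_nonneg hx₂]
  have hS : 0 < a ^ 2 + (t + 1) ^ 2 := by positivity
  have hx0 : 0 < ‖x‖ := norm_pos_iff.mpr hx
  rw [Prod.dist_eq, dist_zero_right, Real.dist_eq]
  refine max_le ?_ ?_
  · rw [invP, norm_smul, Real.norm_of_nonneg (by positivity), div_mul_eq_mul_div,
      div_le_div_iff₀ hS hx0]
    rcases max_choice a t with h | h <;> rw [hnorm, h] <;> nlinarith [norm_nonneg x.1]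
  · have : (invP x).2 - -1 = (2 + 2 * t) / (a ^ 2 + (t + 1) ^ 2) := by
      change (1 - a ^ 2 - t ^ 2) / (a ^ 2 + (t + 1) ^ 2) - -1 = _
      field_simp
      ring
    rw [this, abs_of_nonneg (by positivity), div_le_div_iff₀ hS hx0]
    rcases max_choice a t with h | h <;> rw [hnorm, h] <;> nlinarith [norm_nonneg x.1]

lemma tendsto_invP_cobounded {m : ℕ} :
    Tendsto invP (cobounded (EuclideanSpace ℝ (Fin m) × ℝ) ⊓ 𝓟 {x | 0 ≤ x.2}) (𝓝 (0, -1)) := by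
  have hnorm : Tendsto (fun x : EuclideanSpace ℝ (Fin m) × ℝ => ‖x‖)
      (cobounded _ ⊓ 𝓟 {x | 0 ≤ x.2}) atTop :=
    tendsto_norm_cobounded_atTop.mono_left inf_le_left
  refine tendsto_iff_dist_tendsto_zero.2 <| squeeze_zero' (.of_forall fun _ => dist_nonneg)
    ?_ (by simpa using (hnorm.inv_tendsto_atTop).const_mul 2)
  filter_upwards [hnorm.eventually_gt_atTop 0,
    inf_le_right (a := cobounded _) (mem_principal_self _)] with x hx hx₂
  exact dist_invP_le hx₂ (norm_pos_iff.mp hx)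

lemma measurable_invP {m : ℕ} : Measurable (invP (m := m)) := by
  unfold invP
  fun_prop

section Escape

variable {X Y : Type*} [MeasurableSpace X] {μ : Measure X} {w : X → ℝ}
  [NormedAddCommGroup Y] [MeasurableSpace Y] [OpensMeasurableSpace Y]
  {g : Y → ℝ} {C c : ℝ} {U : Set Y}

lemma abs_integral_comp_mul_sub_le (hw : Integrable w μ) (hw0 : 0 ≤ᵐ[μ] w)
    (hg : Measurable g) (hgC : ∀ y, |g y| ≤ C) {η R : ℝ} (hη : 0 ≤ η)
    (hgU : ∀ y ∈ U, R ≤ ‖y‖ → |g y - c| ≤ η)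
    {f : X → Y} (hf : Measurable f) (hfU : ∀ᵐ x ∂μ, f x ∈ U) :
    |∫ x, g (f x) * w x ∂μ - c * ∫ x, w x ∂μ| ≤
      (C + |c|) * ∫ x in {x | ‖f x‖ < R}, w x ∂μ + η * ∫ x, w x ∂μ := by
  have hB : MeasurableSet {x | ‖f x‖ < R} := measurableSet_lt hf.norm measurable_const
  have hgf : Integrable (fun x => g (f x) * w x) μ :=
    hw.bdd_mul (hg.comp hf).aestronglyMeasurable (.of_forall fun x => hgC (f x))
  rw [← integral_const_mul, ← integral_sub hgf (hw.const_mul c), ← integral_indicator hB,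
    ← integral_const_mul, ← integral_const_mul,
    ← integral_add ((hw.indicator hB).const_mul _) (hw.const_mul η)]
  refine (abs_integral_le_integral_abs).trans (integral_mono_ae ?_ ?_ ?_)
  · exact (hgf.sub (hw.const_mul c)).abs
  · exact ((hw.indicator hB).const_mul _).add (hw.const_mul η)
  filter_upwards [hw0, hfU] with x (hx : 0 ≤ w x) hxU
  rw [← sub_mul, abs_mul, abs_of_nonneg hx]
  by_cases hxB : ‖f x‖ < R
  · have : |g (f x) - c| ≤ C + |c| := by linarith [abs_sub (g (f x)) c, hgC (f x)]
    rw [Set.indicator_of_mem (show x ∈ {x | ‖f x‖ < R} from hxB)]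
    nlinarith [mul_le_mul_of_nonneg_right this hx, mul_nonneg hη hx]
  · rw [Set.indicator_of_notMem (show x ∉ {x | ‖f x‖ < R} from hxB), mul_zero, zero_add]
    exact mul_le_mul_of_nonneg_right (hgU _ hxU (not_lt.mp hxB)) hx

lemma tendsto_integral_comp_mul_of_tendsto_cobounded {ι : Type*} {l : Filter ι}
    (hw : Integrable w μ) (hw0 : 0 ≤ᵐ[μ] w)
    (hg : Measurable g) (hgC : ∀ y, |g y| ≤ C) (hgc : Tendsto g (cobounded Y ⊓ 𝓟 U) (𝓝 c))
    {f : ι → X → Y} (hf : ∀ i, Measurable (f i)) (hfU : ∀ᶠ i in l, ∀ᵐ x ∂μ, f i x ∈ U)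
    (hesc : ∀ R, Tendsto (fun i => ∫ x in {x | ‖f i x‖ < R}, w x ∂μ) l (𝓝 0)) :
    Tendsto (fun i => ∫ x, g (f i x) * w x ∂μ) l (𝓝 (c * ∫ x, w x ∂μ)) := by
  set W := ∫ x, w x ∂μ
  have hW : 0 ≤ W := integral_nonneg_of_ae hw0
  refine Metric.tendsto_nhds.2 fun ε hε => ?_
  set η := ε / (2 * (W + 1))
  have hη : 0 < η := by positivity
  have hηW : η * W < ε := by
    rw [div_mul_eq_mul_div, div_lt_iff₀ (by positivity)]
    nlinarith
  obtain ⟨R, hR⟩ : ∃ R, ∀ y ∈ U, R ≤ ‖y‖ → |g y - c| ≤ η := by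
    have := hgc.eventually (Metric.closedBall_mem_nhds c hη)
    rw [eventually_inf_principal, hasBasis_cobounded_norm.eventually_iff] at this
    obtain ⟨R, -, hR⟩ := this
    exact ⟨R, fun y hyU hyR => by simpa [Real.dist_eq] using hR hyR hyU⟩
  have hbound : Tendsto (fun i => (C + |c|) * ∫ x in {x | ‖f i x‖ < R}, w x ∂μ + η * W) l
      (𝓝 (η * W)) := by
    simpa using ((hesc R).const_mul (C + |c|)).add_const (η * W)
  filter_upwards [hbound.eventually (gt_mem_nhds hηW), hfU] with i hi hiU
  rw [Real.dist_eq]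
  exact (abs_integral_comp_mul_sub_le hw hw0 hg hgC hη.le hR (hf i) hiU).trans_lt hi

end Escape

lemma setOf_norm_smul_add_lt_eq_ball {X : Type*} [NormedAddCommGroup X] [NormedSpace ℝ X]
    {a : ℝ} (ha : 0 < a) (v : X) (R : ℝ) :
    {x | ‖a • x + v‖ < R} = ball (-(a⁻¹ • v)) (R / a) := by
  ext x
  have : a • x + v = a • (x - -(a⁻¹ • v)) := by
    rw [sub_neg_eq_add, smul_add, smul_inv_smul₀ ha.ne']
  rw [Set.mem_ofPred_eq, this, norm_smul, Real.norm_of_nonneg ha.le, mem_ball, dist_eq_norm,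
    lt_div_iff₀ ha, mul_comm]

lemma exists_pos_forall_setIntegral_ball_lt {X : Type*} [NormedAddCommGroup X]
    [NormedSpace ℝ X] [FiniteDimensional ℝ X] [Nontrivial X] [MeasurableSpace X] [BorelSpace X]
    {μ ν : Measure X} [μ.IsAddHaarMeasure] {w : X → ℝ} (hνμ : ν ≤ μ) (hw : Integrable w ν)
    {ε : ℝ} (hε : 0 < ε) : ∃ δ > 0, ∀ c, ∫ x in ball c δ, w x ∂ν < ε := by
  let l : Filter (X × ℝ) := comap Prod.snd (𝓝[>] 0)
  have hr : ∀ᶠ p in l, 0 < p.2 := tendsto_comap.eventually self_mem_nhdsWithin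
  have hvol : Tendsto (fun p : X × ℝ => ν (ball p.1 p.2)) l (𝓝 0) := by
    have h0 : Tendsto (fun p : X × ℝ => p.2) l (𝓝 0) :=
      tendsto_comap.mono_right nhdsWithin_le_nhds
    have hpow : Tendsto (fun p : X × ℝ => ENNReal.ofReal (p.2 ^ Module.finrank ℝ X)) l (𝓝 0) := by
      have h0d : Tendsto (fun p : X × ℝ => p.2 ^ Module.finrank ℝ X) l (𝓝 0) := by
        simpa [zero_pow Module.finrank_pos.ne'] using h0.pow (Module.finrank ℝ X)
      simpa using ENNReal.tendsto_ofReal h0d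
    have hball := ENNReal.Tendsto.mul_const hpow
      (Or.inr (measure_ball_lt_top : μ (ball (0 : X) 1) < ⊤).ne)
    rw [zero_mul] at hball
    refine tendsto_of_tendsto_of_tendsto_of_le_of_le' tendsto_const_nhds hball
      (.of_forall fun _ => bot_le) ?_
    filter_upwards [hr] with p hp
    exact (hνμ _).trans (Measure.addHaar_ball μ p.1 hp.le).le
  have := (hw.tendsto_setIntegral_nhds_zero hvol).eventually (gt_mem_nhds hε)
  obtain ⟨r, hr, hr0⟩ := ((eventually_comap.1 this).and self_mem_nhdsWithin).exists
  exact ⟨r, hr0, fun c => hr (c, r) rfl⟩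

lemma exists_forall_setIntegral_ball_lt {X : Type*} [SeminormedAddCommGroup X]
    [MeasurableSpace X] [OpensMeasurableSpace X] {ν : Measure X} {w : X → ℝ}
    (hw : Integrable w ν) (hw0 : 0 ≤ᵐ[ν] w) {ε : ℝ} (hε : 0 < ε) :
    ∃ T, ∀ c r, T ≤ ‖c‖ - r → ∫ x in ball c r, w x ∂ν < ε := by
  have hempty : ⋂ T : ℝ, (ball (0 : X) T)ᶜ = ∅ :=
    Set.iInter_eq_empty_iff.2 fun x => ⟨‖x‖ + 1, by simp⟩
  have htail : Tendsto (fun T : ℝ => ∫ x in (ball 0 T)ᶜ, w x ∂ν) atTop (𝓝 0) := by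
    simpa [hempty] using tendsto_setIntegral_of_antitone (μ := ν)
      (s := fun T : ℝ => (ball (0 : X) T)ᶜ)
      (fun T => measurableSet_ball.compl)
      (fun _ _ h => Set.compl_subset_compl.2 (ball_subset_ball h)) ⟨0, hw.integrableOn⟩
  obtain ⟨T, hT⟩ := (htail.eventually (gt_mem_nhds hε)).exists
  refine ⟨T, fun c r hcr => lt_of_le_of_lt ?_ hT⟩
  refine setIntegral_mono_set hw.integrableOn (ae_restrict_of_ae hw0) (.of_forall fun x hx => ?_)
  have hx : dist x c < r := hx
  rw [dist_eq_norm'] at hx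
  show x ∈ (ball (0 : X) T)ᶜ
  simp only [Set.mem_compl_iff, mem_ball, dist_zero_right, not_lt]
  linarith [norm_sub_norm_le c x]

lemma tendsto_setIntegral_norm_lt_of_affine {X Y : Type*} [NormedAddCommGroup X]
    [NormedSpace ℝ X] [FiniteDimensional ℝ X] [Nontrivial X] [MeasurableSpace X] [BorelSpace X]
    [Norm Y] {μ ν : Measure X} [μ.IsAddHaarMeasure] {w : X → ℝ} (hνμ : ν ≤ μ)
    (hw : Integrable w ν) (hw0 : 0 ≤ᵐ[ν] w) {ι : Type*} {l : Filter ι} {a : ι → ℝ} {v : ι → X}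
    (ha : ∀ᶠ i in l, 0 < a i) (hav : Tendsto (fun i => a i + ‖v i‖) l atTop)
    {f : ι → X → Y} (hf : ∀ i x, ‖f i x‖ = ‖a i • x + v i‖) (R : ℝ) :
    Tendsto (fun i => ∫ x in {x | ‖f i x‖ < R}, w x ∂ν) l (𝓝 0) := by
  simp_rw [hf]
  refine tendsto_order.2 ⟨fun ε hε => .of_forall fun i =>
    hε.trans_le (integral_nonneg_of_ae (ae_restrict_of_ae hw0)), fun ε hε => ?_⟩
  obtain ⟨δ, hδ, hsmall⟩ := exists_pos_forall_setIntegral_ball_lt hνμ hw hε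
  obtain ⟨T, hfar⟩ := exists_forall_setIntegral_ball_lt hw hw0 hε
  filter_upwards [ha, hav.eventually_ge_atTop (R / δ + R + |T| * (R / δ))] with i hai hN
  rw [setOf_norm_smul_add_lt_eq_ball hai]
  by_cases hr : R / a i ≤ δ
  · refine lt_of_le_of_lt ?_ (hsmall (-((a i)⁻¹ • v i)))
    exact setIntegral_mono_set hw.integrableOn (ae_restrict_of_ae hw0)
      (ball_subset_ball hr).eventuallyLE
  · -- the ball has radius at least `δ`, so `a i < R / δ` and its centre is far out
    refine hfar _ _ ?_
    have haR : a i < R / δ := by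
      rw [not_le, lt_div_iff₀ hai] at hr
      rwa [lt_div_iff₀ hδ, mul_comm]
    rw [norm_neg, norm_smul, Real.norm_of_nonneg (inv_nonneg.2 hai.le), ← div_eq_inv_mul,
      div_sub_div_same, le_div_iff₀ hai]
    have : T * a i ≤ |T| * (R / δ) := (mul_le_mul_of_nonneg_right (le_abs_self T) hai.le).trans
      (mul_le_mul_of_nonneg_left haR.le (abs_nonneg T))
    linarith

lemma integrable_one_div_norm_sq_add_pow {E : Type*} [NormedAddCommGroup E] [NormedSpace ℝ E]
    [FiniteDimensional ℝ E] [MeasurableSpace E] [BorelSpace E] (μ : Measure E)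
    [μ.IsAddHaarMeasure] {a : ℝ} (ha : 0 < a) {k : ℕ} (hk : Module.finrank ℝ E < 2 * k) :
    Integrable (fun x => 1 / (‖x‖ ^ 2 + a) ^ k) μ := by
  have hdom := (integrable_rpow_neg_one_add_norm_sq (μ := μ) (r := 2 * k)
    (by exact_mod_cast hk)).const_mul ((min 1 a)⁻¹ ^ k)
  refine hdom.mono' (Measurable.aestronglyMeasurable (by fun_prop)) (.of_forall fun x => ?_)
  have hb : 0 < min 1 a := lt_min one_pos ha
  have hmin : min 1 a * (1 + ‖x‖ ^ 2) ≤ ‖x‖ ^ 2 + a := by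
    nlinarith [min_le_left 1 a, min_le_right 1 a, sq_nonneg ‖x‖]
  rw [show -(2 * (k : ℝ)) / 2 = -(k : ℝ) by ring, rpow_neg (by positivity), rpow_natCast,
    Real.norm_of_nonneg (by positivity), ← inv_pow, ← mul_pow, ← mul_inv, inv_pow, one_div]
  exact inv_anti₀ (by positivity) (pow_le_pow_left₀ (by positivity) hmin k)

lemma integrableOn_one_div_halfSpace_pow {E : Type*} [NormedAddCommGroup E] [NormedSpace ℝ E]
    [FiniteDimensional ℝ E] [MeasurableSpace E] [BorelSpace E] (μ : Measure (E × ℝ))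
    [μ.IsAddHaarMeasure] {D : ℝ} (hD : 1 < D) {k : ℕ} (hk : Module.finrank ℝ E + 1 < 2 * k) :
    IntegrableOn (fun p : E × ℝ => 1 / (‖p.1‖ ^ 2 + (p.2 + D) ^ 2 - 1) ^ k) {p | 0 < p.2} μ := by
  have hS : MeasurableSet {p : E × ℝ | 0 < p.2} := measurableSet_lt measurable_const measurable_snd
  refine ((integrable_one_div_norm_sq_add_pow μ (a := D ^ 2 - 1) (by nlinarith) (k := k)
    (by simpa using hk)).integrableOn).mono' (Measurable.aestronglyMeasurable (by fun_prop)) ?_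
  filter_upwards [ae_restrict_mem hS] with p (hp : 0 < p.2)
  have hnorm : ‖p‖ ^ 2 ≤ ‖p.1‖ ^ 2 + p.2 ^ 2 := by
    rw [Prod.norm_def, Real.norm_of_nonneg hp.le]
    rcases max_choice ‖p.1‖ p.2 with h | h <;> rw [h] <;> nlinarith [norm_nonneg p.1]
  have hden : ‖p‖ ^ 2 + (D ^ 2 - 1) ≤ ‖p.1‖ ^ 2 + (p.2 + D) ^ 2 - 1 := by nlinarith
  have hpos : 0 < ‖p‖ ^ 2 + (D ^ 2 - 1) := by nlinarith [sq_nonneg ‖p‖]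
  rw [Real.norm_of_nonneg (one_div_nonneg.2 (pow_nonneg (by linarith) k))]
  exact one_div_le_one_div_of_le (by positivity) (pow_le_pow_left₀ hpos.le hden k)

section SouthPole

variable {m : ℕ} {D C : ℝ} {F : EuclideanSpace ℝ (Fin m) × ℝ → ℝ} {ι : Type*} {l : Filter ι}
  {a : ι → ℝ} {v : ι → EuclideanSpace ℝ (Fin m)}

lemma tendsto_setIntegral_halfSpace_invP (hD : 1 < D) (hF : Continuous F) (hFC : ∀ p, |F p| ≤ C)
    (ha : ∀ᶠ i in l, 0 < a i) (hav : Tendsto (fun i => a i + ‖v i‖) l atTop) :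
    Tendsto (fun i => ∫ p in {p : EuclideanSpace ℝ (Fin m) × ℝ | 0 < p.2},
        F (invP (a i • p.1 + v i, a i * p.2)) * (1 / (‖p.1‖ ^ 2 + (p.2 + D) ^ 2 - 1) ^ (m + 1))) l
      (𝓝 (F (0, -1) * ∫ p in {p : EuclideanSpace ℝ (Fin m) × ℝ | 0 < p.2},
        1 / (‖p.1‖ ^ 2 + (p.2 + D) ^ 2 - 1) ^ (m + 1))) := by
  have : (volume : Measure (EuclideanSpace ℝ (Fin m) × ℝ)).IsAddHaarMeasure := by
    rw [Measure.volume_eq_prod]; infer_instance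
  have hS : MeasurableSet {p : EuclideanSpace ℝ (Fin m) × ℝ | 0 < p.2} :=
    measurableSet_lt measurable_const measurable_snd
  have hw0 : 0 ≤ᵐ[volume.restrict {p : EuclideanSpace ℝ (Fin m) × ℝ | 0 < p.2}]
      fun p => 1 / (‖p.1‖ ^ 2 + (p.2 + D) ^ 2 - 1) ^ (m + 1) := by
    filter_upwards [ae_restrict_mem hS] with p (hp : 0 < p.2)
    exact one_div_nonneg.2 (pow_nonneg (by nlinarith [sq_nonneg ‖p.1‖]) _)
  have hw := integrableOn_one_div_halfSpace_pow (volume : Measure (EuclideanSpace ℝ (Fin m) × ℝ))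
    hD (k := m + 1) (by rw [finrank_euclideanSpace_fin]; omega)
  refine tendsto_integral_comp_mul_of_tendsto_cobounded hw hw0 (hF.measurable.comp measurable_invP)
    (fun _ => hFC _) ((hF.tendsto _).comp tendsto_invP_cobounded) (fun i => by fun_prop) ?_
    (tendsto_setIntegral_norm_lt_of_affine Measure.restrict_le_self hw hw0 ha
      (v := fun i => (v i, 0)) (by simpa using hav) fun i p => ?_)
  · filter_upwards [ha] with i hi
    filter_upwards [ae_restrict_mem hS] with p (hp : 0 < p.2)
    exact mul_nonneg hi.le hp.le
  · congr 1
    ext <;> simp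

lemma tendsto_integral_boundary_invP (hm : 1 ≤ m) (hD : 1 < D) (hF : Continuous F)
    (hFC : ∀ p, |F p| ≤ C) (ha : ∀ᶠ i in l, 0 < a i)
    (hav : Tendsto (fun i => a i + ‖v i‖) l atTop) :
    Tendsto (fun i => ∫ y : EuclideanSpace ℝ (Fin m),
        F (invP (a i • y + v i, 0)) * (1 / (‖y‖ ^ 2 + D ^ 2 - 1) ^ m)) l
      (𝓝 (F (0, -1) * ∫ y : EuclideanSpace ℝ (Fin m), 1 / (‖y‖ ^ 2 + D ^ 2 - 1) ^ m)) := by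
  have : Nonempty (Fin m) := ⟨⟨0, hm⟩⟩
  have hw : Integrable (fun y : EuclideanSpace ℝ (Fin m) => 1 / (‖y‖ ^ 2 + D ^ 2 - 1) ^ m) := by
    simpa only [add_sub_assoc] using integrable_one_div_norm_sq_add_pow volume
      (a := D ^ 2 - 1) (by nlinarith) (k := m) (by rw [finrank_euclideanSpace_fin]; omega)
  have hw0 : 0 ≤ᵐ[volume] fun y : EuclideanSpace ℝ (Fin m) => 1 / (‖y‖ ^ 2 + D ^ 2 - 1) ^ m :=
    .of_forall fun y => one_div_nonneg.2 (pow_nonneg (by nlinarith [sq_nonneg ‖y‖]) _)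
  exact tendsto_integral_comp_mul_of_tendsto_cobounded hw hw0 (hF.measurable.comp measurable_invP)
    (fun _ => hFC _) ((hF.tendsto _).comp tendsto_invP_cobounded) (fun i => by fun_prop)
    (.of_forall fun i => .of_forall fun y => show (0 : ℝ) ≤ 0 from le_rfl)
    (tendsto_setIntegral_norm_lt_of_affine le_rfl hw hw0 ha hav fun i y => by simp)

end SouthPole

theorem gamma_tendsto_south_pole_general (m : ℕ) (hm : 1 ≤ m) (D Λ β : ℝ)
    (hD : 1 < D)
    (K H : EuclideanSpace ℝ (Fin m) × ℝ → ℝ)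
    (hK : Continuous K) (hKb : ∃ Cb, ∀ p, |K p| ≤ Cb)
    (hH : Continuous H) (hHb : ∃ Cb, ∀ p, |H p| ≤ Cb) :
    Tendsto
      (fun q : EuclideanSpace ℝ (Fin m) × ℝ =>
        (∫ p in {p : EuclideanSpace ℝ (Fin m) × ℝ | 0 < p.2},
          Λ ^ (((m : ℝ) + 1) / 2) * K (invP (q.2 • p.1 + q.1, q.2 * p.2)) /
            (‖p.1‖ ^ 2 + (p.2 + D) ^ 2 - 1) ^ (m + 1)) -
        ∫ y : EuclideanSpace ℝ (Fin m),
          Λ ^ ((m : ℝ) / 2) * β * D * H (invP (q.2 • y + q.1, 0)) /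
            (‖y‖ ^ 2 + D ^ 2 - 1) ^ m)
      ((Filter.comap (fun q : EuclideanSpace ℝ (Fin m) × ℝ => q.2 + ‖q.1‖) atTop) ⊓
        Filter.principal {q : EuclideanSpace ℝ (Fin m) × ℝ | 0 < q.2})
      (nhds
        ((Λ ^ (((m : ℝ) + 1) / 2) *
            ∫ p in {p : EuclideanSpace ℝ (Fin m) × ℝ | 0 < p.2},
              1 / (‖p.1‖ ^ 2 + (p.2 + D) ^ 2 - 1) ^ (m + 1)) * K (0, -1) -
          (Λ ^ ((m : ℝ) / 2) * β * D *
            ∫ y : EuclideanSpace ℝ (Fin m), 1 / (‖y‖ ^ 2 + D ^ 2 - 1) ^ m) * H (0, -1))) := by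
  obtain ⟨CK, hCK⟩ := hKb
  obtain ⟨CH, hCH⟩ := hHb
  set l := (Filter.comap (fun q : EuclideanSpace ℝ (Fin m) × ℝ => q.2 + ‖q.1‖) atTop) ⊓
    Filter.principal {q : EuclideanSpace ℝ (Fin m) × ℝ | 0 < q.2}
  have hpos : ∀ᶠ q in l, 0 < q.2 := mem_inf_of_right (mem_principal_self _)
  have htop : Tendsto (fun q : EuclideanSpace ℝ (Fin m) × ℝ => q.2 + ‖q.1‖) l atTop :=
    tendsto_comap.mono_left inf_le_left
  have hint := tendsto_setIntegral_halfSpace_invP hD hK hCK hpos htop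
  have hbdry := tendsto_integral_boundary_invP hm hD hH hCH hpos htop
  convert (hint.const_mul (Λ ^ (((m : ℝ) + 1) / 2))).sub
    (hbdry.const_mul (Λ ^ ((m : ℝ) / 2) * β * D)) using 1
  · funext q
    rw [← integral_const_mul, ← integral_const_mul]
    congr 1 <;> congr 1 <;> funext x <;> ring
  · congr 1
    ring

/-- As `λ + |x₀| → +∞` (with `λ > 0`), the reduced functional
`Γ(x₀,λ) = ∫_{ℝⁿ₊} Λ^{n/2} K̃(λȳ+x₀, λyₙ)/(|ȳ|²+(yₙ+D)²-1)ⁿ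
  - ∫_{ℝⁿ⁻¹} Λ^{(n-1)/2} βₙ D H̃(λȳ+x₀)/(|ȳ|²+D²-1)^{n-1}`
(where `K̃ = K ∘ I`, `H̃ = H ∘ I`) converges to `a(D) K(0,…,0,-1) - b(D) H(0,…,0,-1)`.
Here the dimension is `n = m + 1 ≥ 2`. -/
theorem gamma_tendsto_south_pole (m : ℕ) (hm : 1 ≤ m) (D Λ β : ℝ)
    (hD : 1 < D) (hΛ : 0 < Λ) (hβ : 0 < β)
    (K H : EuclideanSpace ℝ (Fin m) × ℝ → ℝ)
    (hK : Continuous K) (hKb : ∃ Cb, ∀ p, |K p| ≤ Cb)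
    (hH : Continuous H) (hHb : ∃ Cb, ∀ p, |H p| ≤ Cb) :
    Tendsto
      (fun q : EuclideanSpace ℝ (Fin m) × ℝ =>
        (∫ p in {p : EuclideanSpace ℝ (Fin m) × ℝ | 0 < p.2},
          Λ ^ (((m : ℝ) + 1) / 2) * K (invP (q.2 • p.1 + q.1, q.2 * p.2)) /
            (‖p.1‖ ^ 2 + (p.2 + D) ^ 2 - 1) ^ (m + 1)) -
        ∫ y : EuclideanSpace ℝ (Fin m),
          Λ ^ ((m : ℝ) / 2) * β * D * H (invP (q.2 • y + q.1, 0)) /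
            (‖y‖ ^ 2 + D ^ 2 - 1) ^ m)
      ((Filter.comap (fun q : EuclideanSpace ℝ (Fin m) × ℝ => q.2 + ‖q.1‖) atTop) ⊓
        Filter.principal {q : EuclideanSpace ℝ (Fin m) × ℝ | 0 < q.2})
      (nhds
        ((Λ ^ (((m : ℝ) + 1) / 2) *
            ∫ p in {p : EuclideanSpace ℝ (Fin m) × ℝ | 0 < p.2},
              1 / (‖p.1‖ ^ 2 + (p.2 + D) ^ 2 - 1) ^ (m + 1)) * K (0, -1) -
          (Λ ^ ((m : ℝ) / 2) * β * D *
            ∫ y : EuclideanSpace ℝ (Fin m), 1 / (‖y‖ ^ 2 + D ^ 2 - 1) ^ m) * H (0, -1))) :=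
  gamma_tendsto_south_pole_general m hm D Λ β hD K H hK hKb hH hHb
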